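/- Let G be a connected r-regular simple graph with r ≥ 2, n vertices and m = nr/2 edges, with Laplacian characteristic polynomial φ(G; μ) = μⁿ + a₁μ^{n−1} + … + a_{n−2}μ² + a_{n−1}μ, and let L_RT be the Laplacian matrix of RT(G). Then the coefficient of μ² in det(μ·I_{m+3n} − L_RT) equals (−2)^(m−n)(−3)^n [ a_{n−2}(r+6)²(−1)^(n−2)(−3)^(n−2) + a_{n−1}(−r−5)(−1)^(n−1)(−3)^(n−1) + a_{n−1}(r+6)(n−1)(−1)^(n−2)(−3)^(n−1) + a_{n−1}(r+6)(−1)^(n−1)(n−1)(−3)^(n−2) ] + (m−n)(−2)^(m−n−1)(−3)^n a_{n−1}(r+6)(−1)^(n−1)(−3)^(n−1) + n(−3)^(n−1)(−2)^(m−n) a_{n−1}(r+6)(−1)^(n−1)(−3)^(n−1). -/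

import Mathlib

/-!
Eliminating first the edge-vertices (a scalar block `(x - 2) I`, with `B Bᵀ = 2r I - L` the
signless Laplacian) and then the pendant pairs (blocks `[[x-2, 1], [1, x-2]]`, for which the pair
incidence is an eigenvector with eigenvalue `x - 1`) gives
`det (x I - L_RT) = (x-2)^(m-n) (x-3)^n det (x q(x) I - p(x) L)` with
`q = x² - (r+5) x + (r+6)` and `p = (x-1)(x-3)`. Expanding the last determinant through `φ(G)`
gives `∑ₖ aₖ (x q)^k p^(n-k)`; as the constant term of `φ(G)` vanishes, only `k = 1, 2` reach the
coefficient of `x²`, which is then read off from the constant and linear terms of the factors.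
-/

open Matrix SimpleGraph

/-- The Laplacian matrix of `RT(G)` in block form, given the vertex–edge incidence
matrix `B` of an `r`-regular graph `G` and its Laplacian matrix `L`.  The index type is
(edge-vertices of `G`) ⊕ (original vertices of `G`) ⊕ (pairs of new vertices). -/
def LRTMatrix {n m : ℕ} (r : ℕ) (B : Matrix (Fin n) (Fin m) ℝ)
    (L : Matrix (Fin n) (Fin n) ℝ) :
    Matrix (Fin m ⊕ Fin n ⊕ Fin n × Fin 2) (Fin m ⊕ Fin n ⊕ Fin n × Fin 2) ℝ :=
  fun i j =>
    match i, j with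
    | Sum.inl a, Sum.inl b => if a = b then 2 else 0
    | Sum.inl a, Sum.inr (Sum.inl v) => -(B v a)
    | Sum.inl _, Sum.inr (Sum.inr _) => 0
    | Sum.inr (Sum.inl v), Sum.inl a => -(B v a)
    | Sum.inr (Sum.inl v), Sum.inr (Sum.inl w) => L v w + (if v = w then (r : ℝ) + 2 else 0)
    | Sum.inr (Sum.inl v), Sum.inr (Sum.inr (w, _)) => if v = w then -1 else 0
    | Sum.inr (Sum.inr _), Sum.inl _ => 0
    | Sum.inr (Sum.inr (w, _)), Sum.inr (Sum.inl v) => if w = v then -1 else 0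
    | Sum.inr (Sum.inr (w, k)), Sum.inr (Sum.inr (w', k')) =>
        if w = w' then (if k = k' then 2 else -1) else 0

open Polynomial Finset
open scoped Kronecker

namespace Polynomial

variable {R : Type*} [CommSemiring R]

theorem mul_coeff_two (p q : R[X]) :
    (p * q).coeff 2 = p.coeff 0 * q.coeff 2 + p.coeff 1 * q.coeff 1 + p.coeff 2 * q.coeff 0 := by
  rw [coeff_mul, Finset.Nat.sum_antidiagonal_eq_sum_range_succ_mk]
  simp [sum_range_succ, add_assoc]

theorem pow_coeff_zero (p : R[X]) (j : ℕ) : (p ^ j).coeff 0 = p.coeff 0 ^ j :=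
  map_pow constantCoeff p j

theorem pow_coeff_one (p : R[X]) (j : ℕ) :
    (p ^ j).coeff 1 = j * p.coeff 1 * p.coeff 0 ^ (j - 1) := by
  induction j with
  | zero => simp [coeff_one]
  | succ j ih =>
    rw [pow_succ, mul_coeff_one, ih, pow_coeff_zero]
    rcases j with _ | j
    · simp
    · simp only [Nat.add_sub_cancel, pow_succ]
      push_cast
      ring

theorem coeff_sum_C_mul_X_mul_pow_mul_pow (c : ℕ → R) (q p : R[X]) {n d : ℕ} (hd : d ≤ n) :
    (∑ k ∈ range (n + 1), C (c k) * (X * q) ^ k * p ^ (n - k)).coeff d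
      = ∑ k ∈ range (d + 1), c k * (q ^ k * p ^ (n - k)).coeff (d - k) := by
  have hterm (k : ℕ) : (C (c k) * (X * q) ^ k * p ^ (n - k)).coeff d
      = if k ≤ d then c k * (q ^ k * p ^ (n - k)).coeff (d - k) else 0 := by
    rw [mul_pow, mul_assoc, mul_assoc, coeff_C_mul, coeff_X_pow_mul', mul_ite, mul_zero]
  rw [finsetSum_coeff, sum_congr rfl fun k _ => hterm k, ← sum_filter]
  congr 1
  ext k
  simp only [mem_filter, mem_range]
  omega

end Polynomial

namespace Matrix

theorem fromBlocks_sub {l m n o α : Type*} [Sub α] (A : Matrix n l α) (B : Matrix n m α)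
    (C : Matrix o l α) (D : Matrix o m α) (A' : Matrix n l α) (B' : Matrix n m α)
    (C' : Matrix o l α) (D' : Matrix o m α) :
    fromBlocks A B C D - fromBlocks A' B' C' D'
      = fromBlocks (A - A') (B - B') (C - C') (D - D') := by
  ext (_ | _) (_ | _) <;> rfl

variable {m n K : Type*} [Fintype m] [Fintype n] [DecidableEq m] [DecidableEq n] [Field K]

theorem det_fromBlocks_of_mul_eq_smul₁₁ {A : Matrix m m K} (B : Matrix m n K) (C : Matrix n m K)
    (D : Matrix n n K) {a : K} (hA : IsUnit A.det) (ha : a ≠ 0) (hAB : A * B = a • B) :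
    (fromBlocks A B C D).det = A.det * (D - a⁻¹ • (C * B)).det := by
  let := invertibleOfIsUnitDet A hA
  have hinv : ⅟A * B = a⁻¹ • B := by
    rw [eq_inv_smul_iff₀ ha, ← Matrix.mul_smul, ← hAB, ← Matrix.mul_assoc, invOf_mul_self,
      Matrix.one_mul]
  rw [det_fromBlocks₁₁, Matrix.mul_assoc, hinv, Matrix.mul_smul]

theorem det_fromBlocks_of_mul_eq_smul₂₂ (A : Matrix m m K) (B : Matrix m n K) (C : Matrix n m K)
    {D : Matrix n n K} {d : K} (hD : IsUnit D.det) (hd : d ≠ 0) (hDC : D * C = d • C) :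
    (fromBlocks A B C D).det = D.det * (A - d⁻¹ • (B * C)).det := by
  let := invertibleOfIsUnitDet D hD
  have hinv : ⅟D * C = d⁻¹ • C := by
    rw [eq_inv_smul_iff₀ hd, ← Matrix.mul_smul, ← hDC, ← Matrix.mul_assoc, invOf_mul_self,
      Matrix.one_mul]
  rw [det_fromBlocks₂₂, Matrix.mul_assoc, hinv, Matrix.mul_smul]

theorem det_smul_one_sub_smul (M : Matrix n n K) (a : K) {b : K} (hb : b ≠ 0) :
    (a • 1 - b • M).det
      = ∑ k ∈ range (Fintype.card n + 1),
          M.charpoly.coeff k * a ^ k * b ^ (Fintype.card n - k) := by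
  have hscalar : a • 1 - b • M = b • (scalar n (a / b) - M) := by
    rw [smul_sub, scalar_apply, ← smul_one_eq_diagonal, smul_smul, mul_div_cancel₀ _ hb]
  have hdeg : M.charpoly.natDegree < Fintype.card n + 1 := by
    rw [charpoly_natDegree_eq_dim]; omega
  rw [hscalar, det_smul, ← eval_charpoly, eval_eq_sum_range' hdeg, mul_sum]
  refine sum_congr rfl fun k hk => ?_
  have hsplit : b ^ Fintype.card n = b ^ (Fintype.card n - k) * b ^ k := by
    rw [← pow_add, Nat.sub_add_cancel (Nat.lt_succ_iff.mp (mem_range.mp hk))]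
  rw [hsplit, div_pow]
  field_simp

end Matrix

namespace SimpleGraph

variable {V ι R : Type*} [Fintype V] [DecidableEq V] {G : SimpleGraph V} [DecidableRel G.Adj]

theorem charpoly_lapMatrix_coeff_zero [Nonempty V] : (G.lapMatrix ℝ).charpoly.coeff 0 = 0 := by
  have h := det_eq_sign_charpoly_coeff (G.lapMatrix ℝ)
  rw [det_lapMatrix_eq_zero] at h
  exact (mul_eq_zero.mp h.symm).resolve_left (pow_ne_zero _ (by norm_num))

theorem IsRegularOfDegree.incMatrix_mul_transpose [Ring R] {r : ℕ} (h : G.IsRegularOfDegree r) :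
    G.incMatrix R * (G.incMatrix R)ᵀ = (2 * r : R) • 1 - G.lapMatrix R := by
  rw [G.incMatrix_mul_transpose]
  ext a b
  by_cases hab : a = b
  · subst hab
    simp [lapMatrix, degMatrix, h a, two_mul]
  · simp [lapMatrix, degMatrix, hab, adjMatrix_apply]

theorem incMatrix_submatrix_edgeSet_mul_transpose [Fintype ι] [Semiring R] (φ : ι ≃ G.edgeSet) :
    (G.incMatrix R).submatrix id (fun j => (φ j : Sym2 V))
        * ((G.incMatrix R).submatrix id (fun j => (φ j : Sym2 V)))ᵀ
      = G.incMatrix R * (G.incMatrix R)ᵀ := by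
  ext v w
  simp only [mul_apply, submatrix_apply, transpose_apply, id]
  rw [Fintype.sum_equiv φ _ (fun e : G.edgeSet => G.incMatrix R v e * G.incMatrix R w e)
      fun _ => rfl,
    ← Finset.sum_subtype G.edgeFinset (fun _ => mem_edgeFinset)
      (fun e => G.incMatrix R v e * G.incMatrix R w e)]
  refine sum_subset (subset_univ _) fun e _ he => ?_
  rw [G.incMatrix_of_notMem_incidenceSet fun hv => he (mem_edgeFinset.mpr hv.1), zero_mul]

end SimpleGraph

section PendantPairs

variable {V K : Type*} [Fintype V] [DecidableEq V]

/-- Row `(v, k)` records the edge from `v` to the `k`-th vertex of the new pair attached to `v`. -/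
def pairIncidence (V K : Type*) [DecidableEq V] [Zero K] [One K] : Matrix (V × Fin 2) V K :=
  (1 : Matrix V V K).submatrix Prod.fst id

variable [CommRing K]

theorem pairIncidence_transpose_mul_self :
    (pairIncidence V K)ᵀ * pairIncidence V K = (2 : K) • 1 := by
  ext v w
  by_cases h : v = w <;>
    simp [pairIncidence, mul_apply, Fintype.sum_prod_type, one_apply, h]

theorem kronecker_mul_pairIncidence (a b : K) :
    ((1 : Matrix V V K) ⊗ₖ !![a, b; b, a]) * pairIncidence V K = (a + b) • pairIncidence V K := by
  ext ⟨v, k⟩ w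
  by_cases h : v = w <;> fin_cases k <;>
    simp [pairIncidence, mul_apply, Fintype.sum_prod_type, one_apply, h, Fin.sum_univ_two,
      add_comm]

end PendantPairs

section LRT

variable {n m : ℕ} (r : ℕ) (B : Matrix (Fin n) (Fin m) ℝ) (L : Matrix (Fin n) (Fin n) ℝ)

theorem scalar_sub_LRTMatrix (x : ℝ) :
    scalar _ x - LRTMatrix r B L
      = fromBlocks ((x - 2) • 1) (fromCols Bᵀ 0) (fromRows B 0)
          (fromBlocks ((x - (r + 2)) • 1 - L) (pairIncidence (Fin n) ℝ)ᵀ (pairIncidence (Fin n) ℝ)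
            ((1 : Matrix (Fin n) (Fin n) ℝ) ⊗ₖ !![x - 2, 1; 1, x - 2])) := by
  ext (a | v | ⟨v, k⟩) (b | w | ⟨w, k'⟩)
  case inr.inr.inr.inr =>
    by_cases h : v = w <;> fin_cases k <;> fin_cases k' <;>
      simp [LRTMatrix, pairIncidence, h, scalar_apply]
  all_goals simp [LRTMatrix, pairIncidence, one_apply, scalar_apply, diagonal_apply]
  all_goals split_ifs <;> ring

theorem det_scalar_sub_LRTMatrix (hBBt : B * Bᵀ = (2 * r : ℝ) • 1 - L) (hmn : n ≤ m) {x : ℝ}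
    (hx1 : x ≠ 1) (hx2 : x ≠ 2) (hx3 : x ≠ 3) :
    (scalar _ x - LRTMatrix r B L).det
      = (x - 2) ^ (m - n) * (x - 3) ^ n
          * ((x * (x ^ 2 - (r + 5) * x + (r + 6))) • 1 - ((x - 1) * (x - 3)) • L).det := by
  have hx1' : x - 1 ≠ 0 := sub_ne_zero.mpr hx1
  have hx2' : x - 2 ≠ 0 := sub_ne_zero.mpr hx2
  have hx3' : x - 3 ≠ 0 := sub_ne_zero.mpr hx3
  have hpair : ((1 : Matrix (Fin n) (Fin n) ℝ) ⊗ₖ !![x - 2, 1; 1, x - 2]) * pairIncidence (Fin n) ℝ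
      = (x - 1) • pairIncidence (Fin n) ℝ := by
    rw [kronecker_mul_pairIncidence]
    ring_nf
  have hdet_pair : ((1 : Matrix (Fin n) (Fin n) ℝ) ⊗ₖ !![x - 2, 1; 1, x - 2]).det
      = ((x - 1) * (x - 3)) ^ n := by
    rw [det_kronecker, det_one, one_pow, one_mul, det_fin_two_of, Fintype.card_fin]
    ring_nf
  have hunit : IsUnit ((1 : Matrix (Fin n) (Fin n) ℝ) ⊗ₖ !![x - 2, 1; 1, x - 2]).det := by
    rw [hdet_pair]
    exact (pow_ne_zero _ (mul_ne_zero hx1' hx3')).isUnit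
  have hschur : (x - (r + 2)) • 1 - L - (x - 2)⁻¹ • (B * Bᵀ)
        - (x - 1)⁻¹ • ((pairIncidence (Fin n) ℝ)ᵀ * pairIncidence (Fin n) ℝ)
      = ((x - 1) * (x - 2))⁻¹ •
          ((x * (x ^ 2 - (r + 5) * x + (r + 6))) • 1 - ((x - 1) * (x - 3)) • L) := by
    rw [hBBt, pairIncidence_transpose_mul_self]
    ext i j
    by_cases h : i = j <;> simp [one_apply, h] <;> field_simp <;> ring
  rw [scalar_sub_LRTMatrix, det_fromBlocks_of_mul_eq_smul₁₁ _ _ _ (by simp [hx2']) hx2' (by simp),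
    fromRows_mul_fromCols]
  simp only [Matrix.mul_zero, Matrix.zero_mul, fromBlocks_smul, smul_zero, fromBlocks_sub,
    sub_zero]
  rw [det_fromBlocks_of_mul_eq_smul₂₂ _ _ _ hunit hx1' hpair, hschur, det_smul, det_smul, det_one,
    hdet_pair, Fintype.card_fin, Fintype.card_fin, ← Nat.sub_add_cancel hmn, pow_add,
    Nat.add_sub_cancel, inv_pow, mul_pow, mul_pow]
  field_simp

theorem charpoly_LRTMatrix (hBBt : B * Bᵀ = (2 * r : ℝ) • 1 - L) (hmn : n ≤ m) :
    (LRTMatrix r B L).charpoly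
      = (X - C 2) ^ (m - n) * (X - C 3) ^ n *
          ∑ k ∈ range (n + 1), C (L.charpoly.coeff k) *
            (X * (X ^ 2 - C ((r : ℝ) + 5) * X + C ((r : ℝ) + 6))) ^ k *
            ((X - C 1) * (X - C 3)) ^ (n - k) := by
  refine eq_of_infinite_eval_eq _ _ ((Set.Ioi_infinite 3).mono fun x (hx : 3 < x) => ?_)
  have hx1 : x ≠ 1 := by linarith
  have hx3 : x ≠ 3 := hx.ne'
  rw [Set.mem_ofPred_eq, eval_charpoly,
    det_scalar_sub_LRTMatrix r B L hBBt hmn hx1 (by linarith) hx3,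
    det_smul_one_sub_smul _ _ (mul_ne_zero (sub_ne_zero.mpr hx1) (sub_ne_zero.mpr hx3))]
  simp [eval_finsetSum]

theorem coeff_two_charpoly_LRTMatrix (hBBt : B * Bᵀ = (2 * r : ℝ) • 1 - L) (hmn : n ≤ m)
    (hn : 2 ≤ n) (hc0 : L.charpoly.coeff 0 = 0) :
    (LRTMatrix r B L).charpoly.coeff 2
      = (-2) ^ (m - n) * (-3) ^ n *
          (L.charpoly.coeff 2 * (r + 6) ^ 2 * 3 ^ (n - 2)
            - L.charpoly.coeff 1 * (r + 5) * 3 ^ (n - 1)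
            - 4 * L.charpoly.coeff 1 * (r + 6) * (n - 1) * 3 ^ (n - 2))
        + ((m - n : ℕ) * (-2) ^ (m - n - 1) * (-3) ^ n + n * (-2) ^ (m - n) * (-3) ^ (n - 1))
          * (L.charpoly.coeff 1 * (r + 6) * 3 ^ (n - 1)) := by
  set q : ℝ[X] := X ^ 2 - C ((r : ℝ) + 5) * X + C ((r : ℝ) + 6)
  set p : ℝ[X] := (X - C 1) * (X - C 3)
  have hq0 : q.coeff 0 = r + 6 := by simp [q]
  have hq1 : q.coeff 1 = -(r + 5) := by simp [q]
  have hp0 : p.coeff 0 = 3 := by norm_num [p]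
  have hp1 : p.coeff 1 = -4 := by norm_num [p, mul_coeff_one, coeff_one]
  have hF (d : ℕ) (hd : d ≤ n) :
      (∑ k ∈ range (n + 1), C (L.charpoly.coeff k) * (X * q) ^ k * p ^ (n - k)).coeff d
        = ∑ k ∈ range (d + 1), L.charpoly.coeff k * (q ^ k * p ^ (n - k)).coeff (d - k) :=
    coeff_sum_C_mul_X_mul_pow_mul_pow _ _ _ hd
  rw [charpoly_LRTMatrix r B L hBBt hmn, mul_coeff_two, hF 0 (by omega), hF 1 (by omega), hF 2 hn]
  simp only [sum_range_succ, sum_range_zero, hc0, zero_mul, zero_add, mul_zero, add_zero,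
    Nat.sub_self, Nat.add_one_sub_one, pow_one, mul_coeff_zero, mul_coeff_one, pow_coeff_zero,
    pow_coeff_one, hq0, hq1, hp0, hp1, Nat.sub_sub]
  norm_num [coeff_one]
  rw [Nat.cast_sub (by omega : 1 ≤ n)]
  push_cast
  ring

end LRT

theorem quadratic_coeff_charpoly_LRT {n m : ℕ} (r : ℕ) (hr : 2 ≤ r)
    (G : SimpleGraph (Fin n)) [DecidableRel G.Adj]
    (hconn : G.Connected) (hreg : G.IsRegularOfDegree r) (hm : 2 * m = n * r)
    (φ : Fin m ≃ G.edgeSet) (B : Matrix (Fin n) (Fin m) ℝ)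
    (hB : ∀ (v : Fin n) (j : Fin m), B v j = if v ∈ (φ j : Sym2 (Fin n)) then 1 else 0) :
    (LRTMatrix r B (G.lapMatrix ℝ)).charpoly.coeff 2
      = (-2 : ℝ) ^ ((m : ℤ) - (n : ℤ)) * (-3 : ℝ) ^ n *
          ( ((G.lapMatrix ℝ).charpoly.coeff 2) * ((r : ℝ) + 6) ^ 2 *
              (-1 : ℝ) ^ (n - 2) * (-3 : ℝ) ^ (n - 2)
            + ((G.lapMatrix ℝ).charpoly.coeff 1) * (-(r : ℝ) - 5) *
              (-1 : ℝ) ^ (n - 1) * (-3 : ℝ) ^ (n - 1)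
            + ((G.lapMatrix ℝ).charpoly.coeff 1) * ((r : ℝ) + 6) * ((n : ℝ) - 1) *
              (-1 : ℝ) ^ (n - 2) * (-3 : ℝ) ^ (n - 1)
            + ((G.lapMatrix ℝ).charpoly.coeff 1) * ((r : ℝ) + 6) *
              (-1 : ℝ) ^ (n - 1) * ((n : ℝ) - 1) * (-3 : ℝ) ^ (n - 2) )
        + ((m : ℝ) - (n : ℝ)) * (-2 : ℝ) ^ ((m : ℤ) - (n : ℤ) - 1) * (-3 : ℝ) ^ n *
            ((G.lapMatrix ℝ).charpoly.coeff 1) * ((r : ℝ) + 6) *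
            (-1 : ℝ) ^ (n - 1) * (-3 : ℝ) ^ (n - 1)
        + (n : ℝ) * (-3 : ℝ) ^ (n - 1) * (-2 : ℝ) ^ ((m : ℤ) - (n : ℤ)) *
            ((G.lapMatrix ℝ).charpoly.coeff 1) * ((r : ℝ) + 6) *
            (-1 : ℝ) ^ (n - 1) * (-3 : ℝ) ^ (n - 1) := by
  obtain ⟨v⟩ := hconn.nonempty
  have : Nonempty (Fin n) := ⟨v⟩
  have hrn : r < n := by simpa [hreg v] using G.degree_lt_card_verts v
  have hmn : n ≤ m := by nlinarith
  have hB_inc : B = (G.incMatrix ℝ).submatrix id (fun j => (φ j : Sym2 (Fin n))) := by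
    ext w j
    have hmem : (φ j : Sym2 (Fin n)) ∈ G.incidenceSet w ↔ w ∈ (φ j : Sym2 (Fin n)) :=
      ⟨And.right, And.intro (φ j).2⟩
    simp [hB, incMatrix_apply', hmem]
  have hBBt : B * Bᵀ = (2 * r : ℝ) • 1 - G.lapMatrix ℝ := by
    rw [hB_inc, incMatrix_submatrix_edgeSet_mul_transpose, hreg.incMatrix_mul_transpose]
  rw [coeff_two_charpoly_LRTMatrix r B _ hBBt hmn (by omega) G.charpoly_lapMatrix_coeff_zero]
  -- What remains is `(-1) ^ j * (-3) ^ j = 3 ^ j`, and the `zpow` exponent `-1` when `m = n`,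
  -- where its coefficient `m - n` vanishes.
  obtain ⟨k, rfl⟩ : ∃ k, n = k + 2 := ⟨n - 2, by omega⟩
  obtain ⟨t, rfl⟩ : ∃ t, m = k + 2 + t := ⟨m - (k + 2), by omega⟩
  simp only [Nat.add_sub_cancel_left, Nat.add_sub_cancel, Nat.cast_add, add_sub_cancel_left,
    zpow_natCast, show k + 2 - 1 = k + 1 from rfl]
  rcases t with _ | t <;> rcases Nat.even_or_odd k with hk | hk <;>
    simp only [Nat.cast_succ, add_sub_cancel_right, zpow_natCast, Nat.add_sub_cancel, pow_succ,
      hk.neg_one_pow, hk.neg_pow] <;>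
    push_cast <;> ring
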